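/- arXiv:2210.15076 — 7 statements merged into one kernel-verified Lean document; each statement's English description precedes it below -/
import Mathlib

section
/- For all integers n, s, k with n ≥ 2s+1 and k ≥ 2, the graph G(n,k,s) (the complete k-partite graph on n vertices with k−1 classes of total size s whose sizes are as equal as possible and one class of size n−s) contains no clique on k+1 vertices, has matching number at most s, and has exactly g(n,k,s) edges. -/
/-!
Colouring each vertex of `G(n,k,s)` by its class is a proper `k`-colouring, so there is no
`(k+1)`-clique. The `s` vertices outside the large class cover every edge, and a matching has at
most as many edges as a vertex cover has vertices, since distinct matching edges are disjoint.
-/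

/-- `t(n,k)`: the number of edges of the Turán graph `T(n,k)`. -/
noncomputable def turanNum (n k : ℕ) : ℕ := ((SimpleGraph.turanGraph n k).edgeSet).ncard

/-- The graph `G(n,k,s)`: the complete `k`-partite graph on `n` vertices consisting of
`k-1` classes of total size `s` whose sizes are as equal as possible (vertices `i < s`,
grouped by residue mod `k-1`), and one additional class of size `n-s` (vertices `i ≥ s`). -/
def gGraph (n k s : ℕ) : SimpleGraph (Fin n) where
  Adj i j := ((i : ℕ) < s ∧ (j : ℕ) < s ∧ (i : ℕ) % (k-1) ≠ (j : ℕ) % (k-1)) ∨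
    ((i : ℕ) < s ∧ s ≤ (j : ℕ)) ∨ (s ≤ (i : ℕ) ∧ (j : ℕ) < s)
  symm := by
    constructor
    rintro i j (⟨h1, h2, h3⟩ | ⟨h1, h2⟩ | ⟨h1, h2⟩)
    · exact Or.inl ⟨h2, h1, h3.symm⟩
    · exact Or.inr (Or.inr ⟨h2, h1⟩)
    · exact Or.inr (Or.inl ⟨h2, h1⟩)
  loopless := by
    constructor
    rintro i (⟨h1, h2, h3⟩ | ⟨h1, h2⟩ | ⟨h1, h2⟩)
    · exact h3 rfl
    · omega
    · omega

/-- `g(n,k,s)`: the number of edges of the graph `G(n,k,s)`. -/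
noncomputable def gNum (n k s : ℕ) : ℕ := (gGraph n k s).edgeSet.ncard

/-- The matching number of `G` is at most `s`: every matching of `G` has at most `s` edges. -/
def MatchingNumberLE {V : Type*} (G : SimpleGraph V) (s : ℕ) : Prop :=
  ∀ M : G.Subgraph, M.IsMatching → M.edgeSet.ncard ≤ s

namespace SimpleGraph

variable {V : Type*} {G : SimpleGraph V} {M : G.Subgraph}

lemma Subgraph.IsMatching.eq_of_mem_edgeSet_of_mem (hM : M.IsMatching) {e₁ e₂ : Sym2 V}
    (he₁ : e₁ ∈ M.edgeSet) (he₂ : e₂ ∈ M.edgeSet) {v : V} (hv₁ : v ∈ e₁) (hv₂ : v ∈ e₂) :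
    e₁ = e₂ := by
  obtain ⟨w₁, rfl⟩ := Sym2.mem_iff_exists.mp hv₁
  obtain ⟨w₂, rfl⟩ := Sym2.mem_iff_exists.mp hv₂
  rw [M.mem_edgeSet] at he₁ he₂
  rw [hM.eq_of_adj_left he₁ he₂]

theorem Subgraph.IsMatching.ncard_edgeSet_le_of_isVertexCover (hM : M.IsMatching) {c : Set V}
    (hc : G.IsVertexCover c) (hfin : c.Finite) : M.edgeSet.ncard ≤ c.ncard := by
  have : Finite c := hfin
  have hcover (e : M.edgeSet) : ∃ v ∈ c, v ∈ (e : Sym2 V) := by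
    obtain ⟨⟨v, w⟩, he⟩ := e
    rcases hc (M.adj_sub he) with hv | hw
    exacts [⟨v, hv, Sym2.mem_mk_left v w⟩, ⟨w, hw, Sym2.mem_mk_right v w⟩]
  choose f hfc hfe using hcover
  refine Nat.card_le_card_of_injective (fun e ↦ ⟨f e, hfc e⟩) fun e₁ e₂ h ↦ Subtype.ext ?_
  exact hM.eq_of_mem_edgeSet_of_mem e₁.2 e₂.2 (hfe e₁) (Subtype.mk_eq_mk.mp h ▸ hfe e₂)

end SimpleGraph

open SimpleGraph

theorem gGraph_colorable (n s : ℕ) {k : ℕ} (hk : 2 ≤ k) : (gGraph n k s).Colorable k := by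
  have hmod (v : ℕ) : v % (k - 1) < k - 1 := Nat.mod_lt _ (by omega)
  refine ⟨Coloring.mk (fun v ↦
    if (v : ℕ) < s then ⟨v % (k - 1), (hmod v).trans (by omega)⟩ else ⟨k - 1, by omega⟩) ?_⟩
  rintro v w (⟨hv, hw, hne⟩ | ⟨hv, hw⟩ | ⟨hv, hw⟩) <;> have := hmod v <;> have := hmod w <;>
    split_ifs <;> simp only [ne_eq, Fin.ext_iff] <;> omega

theorem gGraph_isVertexCover (n k s : ℕ) : (gGraph n k s).IsVertexCover {v | (v : ℕ) < s} := by
  rintro v w (⟨hv, -⟩ | ⟨hv, -⟩ | ⟨-, hw⟩)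
  exacts [Or.inl hv, Or.inl hv, Or.inr hw]

theorem ncard_setOf_val_lt_le (n s : ℕ) : {v : Fin n | (v : ℕ) < s}.ncard ≤ s := by
  have := Set.ncard_le_ncard_of_injOn Fin.val (s := {v : Fin n | (v : ℕ) < s})
    (fun _ hv ↦ Set.mem_Iio.mpr hv) Fin.val_injective.injOn (Set.finite_Iio s)
  rwa [Set.ncard_Iio_nat] at this

theorem gGraph_properties_general (n s k : ℕ) (hk : 2 ≤ k) :
    (gGraph n k s).CliqueFree (k + 1) ∧ MatchingNumberLE (gGraph n k s) s ∧
      (gGraph n k s).edgeSet.ncard = gNum n k s :=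
  ⟨(gGraph_colorable n s hk).cliqueFree k.lt_succ_self,
    fun _ hM ↦ (hM.ncard_edgeSet_le_of_isVertexCover (gGraph_isVertexCover n k s)
      (Set.toFinite _)).trans (ncard_setOf_val_lt_le n s),
    rfl⟩

/-- For all integers `n, s, k` with `n ≥ 2s+1` and `k ≥ 2`, the graph `G(n,k,s)` contains no
clique on `k+1` vertices, has matching number at most `s`, and has exactly `g(n,k,s)` edges. -/
theorem gGraph_properties (n s k : ℕ) (hn : 2 * s + 1 ≤ n) (hk : 2 ≤ k) :
    (gGraph n k s).CliqueFree (k + 1) ∧ MatchingNumberLE (gGraph n k s) s ∧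
      (gGraph n k s).edgeSet.ncard = gNum n k s :=
  gGraph_properties_general n s k hk
end

section
/- Fix integers k ≥ 2, s ≥ 1 and n ≥ 2s+1, and define f(b) = t(2s−b+1, k) + b·(n−2s+b−1) for integers 0 ≤ b ≤ s. Then f is discretely convex on this range, i.e. f(b+2) − f(b+1) ≥ f(b+1) − f(b) for all b with 0 ≤ b ≤ s−2. -/
open Finset SimpleGraph

lemma card_filter_range_mod_eq_mod (n k : ℕ) : #{j ∈ range n | j % k = n % k} = n / k := by
  rcases k.eq_zero_or_pos with rfl | hk
  · simp
  · have := Nat.count_modEq_card n hk n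
    rwa [if_neg (lt_irrefl _), add_zero, Nat.count_eq_card_filter_range] at this

lemma degree_last_turanGraph (n k : ℕ) :
    (turanGraph (n + 1) k).degree (Fin.last n) = n - n / k := by
  rw [← card_neighborFinset_eq_degree, neighborFinset_eq_filter, card_filter,
    Fin.sum_univ_castSucc]
  simp only [turanGraph_adj, Fin.val_castSucc, Fin.val_last, ne_eq, not_true_eq_false, if_false,
    add_zero]
  rw [Fin.sum_univ_eq_sum_range (fun j => if ¬n % k = j % k then 1 else 0), ← card_filter]
  have hsplit := card_filter_add_card_filter_not (s := range n) (p := fun j => j % k = n % k)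
  rw [card_filter_range_mod_eq_mod, card_range] at hsplit
  simp only [eq_comm (a := n % k)]
  omega

def turanGraphIsoInduceComplLast (n k : ℕ) :
    turanGraph n k ≃g (turanGraph (n + 1) k).induce {Fin.last n}ᶜ where
  toEquiv := finSuccAboveEquiv (Fin.last n)
  map_rel_iff' {a b} := by
    change (turanGraph (n + 1) k).Adj ((Fin.last n).succAbove a) ((Fin.last n).succAbove b) ↔ _
    simp [turanGraph_adj]

lemma card_edgeFinset_turanGraph_succ (n k : ℕ) :
    #(turanGraph (n + 1) k).edgeFinset = #(turanGraph n k).edgeFinset + (n - n / k) := by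
  have hdel := (turanGraph (n + 1) k).card_edgeFinset_induce_compl_singleton (Fin.last n)
  have hdeg := (turanGraph (n + 1) k).degree_le_card_edgeFinset (Fin.last n)
  rw [← (turanGraphIsoInduceComplLast n k).card_edgeFinset_eq,
    card_edgeFinset_deleteIncidenceSet, degree_last_turanGraph] at hdel
  rw [degree_last_turanGraph] at hdeg
  omega

lemma turanNum_eq_card_edgeFinset (n k : ℕ) : turanNum n k = #(turanGraph n k).edgeFinset := by
  rw [turanNum, ← coe_edgeFinset, Set.ncard_coe_finset]

lemma turanNum_succ (n k : ℕ) : turanNum (n + 1) k = turanNum n k + (n - n / k) := by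
  simp only [turanNum_eq_card_edgeFinset, card_edgeFinset_turanGraph_succ]

lemma two_mul_turanNum_succ_le (n k : ℕ) :
    2 * turanNum (n + 1) k ≤ turanNum n k + turanNum (n + 2) k := by
  have h₁ := turanNum_succ n k
  have h₂ : turanNum (n + 2) k = turanNum (n + 1) k + (n + 1 - (n + 1) / k) :=
    turanNum_succ (n + 1) k
  have hdiv := Nat.div_le_self n k
  rw [Nat.succ_div] at h₂
  split_ifs at h₂ <;> omega

theorem f_discretely_convex_general (n s k : ℕ)
    (f : ℕ → ℤ)
    (hf : ∀ b : ℕ, b ≤ s →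
      f b = (turanNum (2 * s - b + 1) k : ℤ) + (b : ℤ) * ((n : ℤ) - 2 * s + b - 1)) :
    ∀ b : ℕ, b + 2 ≤ s → f (b + 1) - f b ≤ f (b + 2) - f (b + 1) := by
  intro b hb
  obtain ⟨q, hq⟩ : ∃ q, 2 * s - (b + 2) + 1 = q := ⟨_, rfl⟩
  have h₁ : 2 * s - (b + 1) + 1 = q + 1 := by omega
  have h₀ : 2 * s - b + 1 = q + 2 := by omega
  have hconv : 2 * (turanNum (q + 1) k : ℤ) ≤ turanNum q k + turanNum (q + 2) k := by
    exact_mod_cast two_mul_turanNum_succ_le q k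
  rw [hf b (by omega), hf (b + 1) (by omega), hf (b + 2) (by omega), h₀, h₁, hq]
  push_cast
  linarith

/-- Fix integers `k ≥ 2`, `s ≥ 1` and `n ≥ 2s+1`, and define
`f(b) = t(2s-b+1, k) + b·(n-2s+b-1)` for integers `0 ≤ b ≤ s`. Then `f` is discretely convex
on this range: `f(b+2) - f(b+1) ≥ f(b+1) - f(b)` for all `b` with `0 ≤ b ≤ s-2`. -/
theorem f_discretely_convex (n s k : ℕ) (hk : 2 ≤ k) (hs : 1 ≤ s) (hn : 2 * s + 1 ≤ n)
    (f : ℕ → ℤ)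
    (hf : ∀ b : ℕ, b ≤ s →
      f b = (turanNum (2 * s - b + 1) k : ℤ) + (b : ℤ) * ((n : ℤ) - 2 * s + b - 1)) :
    ∀ b : ℕ, b + 2 ≤ s → f (b + 1) - f b ≤ f (b + 2) - f (b + 1) :=
  f_discretely_convex_general n s k f hf
end

section
/- Every simple graph with matching number at most s has at most s vertices of degree exceeding 2s. -/
/-!
Pick `s + 1` vertices of degree `> 2s`, forming a set `S`. Each `v ∈ S` has at most `s`
neighbours inside `S`, hence at least `s + 1 = |S|` neighbours outside `S`, so Hall's condition
holds trivially and the vertices of `S` can be given distinct partners outside `S`. The edges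
to these partners form a matching with `s + 1` edges.
-/

open Finset Function

theorem Finset.exists_injective_mem_of_card_le {ι α : Type*} [Fintype ι] [DecidableEq α]
    (t : ι → Finset α) (ht : ∀ i, Fintype.card ι ≤ #(t i)) :
    ∃ f : ι → α, Injective f ∧ ∀ i, f i ∈ t i := by
  refine (all_card_le_biUnion_card_iff_exists_injective t).mp fun s => ?_
  obtain rfl | ⟨i, hi⟩ := s.eq_empty_or_nonempty
  · simp
  · exact (card_le_univ s).trans <| (ht i).trans <| card_le_card <| subset_biUnion_of_mem t hi

namespace SimpleGraph

variable {V : Type*} {G : SimpleGraph V}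

lemma exists_isMatching_ncard_edgeSet_eq {s : Set V} (f : s → V) (hf : Injective f)
    (hadj : ∀ v : s, G.Adj v (f v)) (hout : ∀ v, f v ∉ s) :
    ∃ M : G.Subgraph, M.IsMatching ∧ M.edgeSet.ncard = Nat.card s := by
  refine ⟨⨆ v, G.subgraphOfAdj (hadj v),
    Subgraph.IsMatching.iSup (fun v => .subgraphOfAdj _) fun v w hvw => ?_, ?_⟩
  · simp only [support_subgraphOfAdj, Set.disjoint_insert_left, Set.disjoint_insert_right,
      Set.disjoint_singleton, Set.mem_insert_iff, Set.mem_singleton_iff, not_or]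
    exact ⟨⟨Subtype.coe_ne_coe.mpr hvw.symm, fun h => hout v (h ▸ w.2)⟩,
      fun h => hout w (h ▸ v.2), hf.ne hvw⟩
  · rw [Subgraph.edgeSet_iSup]
    simp_rw [edgeSet_subgraphOfAdj]
    rw [Set.iUnion_singleton_eq_range, Set.ncard_range_of_injective]
    intro v w hvw
    obtain ⟨hv, -⟩ | ⟨hv, -⟩ := Sym2.eq_iff.mp hvw
    · exact Subtype.ext hv
    · exact absurd (hv ▸ v.2) (hout w)

lemma card_neighborFinset_lt_card_sdiff_add_card [DecidableEq V] {v : V}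
    [Fintype (G.neighborSet v)] {S : Finset V} (hv : v ∈ S) :
    #(G.neighborFinset v) < #(G.neighborFinset v \ S) + #S := by
  have hinter : #(G.neighborFinset v ∩ S) < #S :=
    card_lt_card ⟨inter_subset_right,
      fun h => G.notMem_neighborFinset_self v (mem_of_mem_inter_left (h hv))⟩
  have := card_sdiff_add_card_inter (G.neighborFinset v) S
  omega

end SimpleGraph

/-- Every simple graph with matching number at most `s` has at most `s` vertices of degree
exceeding `2s`. -/
theorem few_high_degree_vertices {V : Type*} [Fintype V] (G : SimpleGraph V) (s : ℕ)
    (hmatch : MatchingNumberLE G s) :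
    {v : V | 2 * s < (G.neighborSet v).ncard}.ncard ≤ s := by
  classical
  by_contra! hmany
  obtain ⟨S, hSsub, hScard⟩ := exists_subset_card_eq (n := s + 1)
    (s := {v : V | 2 * s < (G.neighborSet v).ncard}.toFinset)
    (by rwa [← Set.ncard_eq_toFinset_card'])
  have hdeg (v : S) : 2 * s < #(G.neighborFinset v) := by
    have hv := hSsub v.2
    rwa [Set.mem_toFinset, Set.mem_ofPred_eq, ← G.coe_neighborFinset, Set.ncard_coe_finset] at hv
  obtain ⟨f, hf, hfS⟩ := exists_injective_mem_of_card_le (fun v : S => G.neighborFinset v \ S)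
    fun v => by
      have := G.card_neighborFinset_lt_card_sdiff_add_card v.2
      have := hdeg v
      rw [Fintype.card_coe]
      omega
  simp only [mem_sdiff, SimpleGraph.mem_neighborFinset] at hfS
  obtain ⟨M, hM, hMcard⟩ := SimpleGraph.exists_isMatching_ncard_edgeSet_eq (s := (S : Set V))
    f hf (fun v => (hfS v).1) fun v => (hfS v).2
  have := hmatch M hM
  rw [hMcard, Nat.card_coe_set_eq, Set.ncard_coe_finset] at this
  omega
end

section
/- Let G be a simple graph with matching number at most s, and let X be a set of exactly s vertices of G each of degree exceeding 2s. Then the complement V(G) ∖ X is an independent set in G, i.e. no edge of G has both endpoints outside X. -/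
namespace SimpleGraph

variable {V : Type*} {G : SimpleGraph V}

lemma exists_adj_notMem_of_ncard_lt [Finite V] {S : Set V} {x : V}
    (h : S.ncard < (G.neighborSet x).ncard) : ∃ w, G.Adj x w ∧ w ∉ S :=
  Set.exists_mem_notMem_of_ncard_lt_ncard h

namespace Subgraph

variable {M : G.Subgraph} {x w : V}

lemma IsMatching.sup_subgraphOfAdj (hM : M.IsMatching) (hxw : G.Adj x w) (hx : x ∉ M.verts)
    (hw : w ∉ M.verts) : (M ⊔ G.subgraphOfAdj hxw).IsMatching := by
  refine hM.sup (.subgraphOfAdj hxw) ?_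
  rw [hM.support_eq_verts, support_subgraphOfAdj, Set.disjoint_insert_right,
    Set.disjoint_singleton_right]
  exact ⟨hx, hw⟩

lemma ncard_edgeSet_sup_subgraphOfAdj [Finite V] (hxw : G.Adj x w) (hx : x ∉ M.verts) :
    (M ⊔ G.subgraphOfAdj hxw).edgeSet.ncard = M.edgeSet.ncard + 1 := by
  rw [edgeSet_sup, edgeSet_subgraphOfAdj, Set.union_singleton, Set.ncard_insert_of_notMem]
  exact fun h ↦ hx (M.edge_vert (Subgraph.mem_edgeSet.mp h))

lemma ncard_verts_sup_subgraphOfAdj_le [Finite V] (hxw : G.Adj x w) :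
    (M ⊔ G.subgraphOfAdj hxw).verts.ncard ≤ M.verts.ncard + 2 := by
  rw [verts_sup, subgraphOfAdj_verts, ← Set.ncard_pair hxw.ne]
  exact Set.ncard_union_le _ _

theorem IsMatching.exists_ncard_edgeSet_eq_add [Finite V] (Y : Finset V) :
    ∀ M : G.Subgraph, M.IsMatching → Disjoint (Y : Set V) M.verts →
      (∀ y ∈ Y, M.verts.ncard + 2 * Y.card < (G.neighborSet y).ncard + 2) →
      ∃ M' : G.Subgraph, M'.IsMatching ∧ M'.edgeSet.ncard = M.edgeSet.ncard + Y.card := by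
  classical
  induction Y using Finset.induction_on with
  | empty => exact fun M hM _ _ ↦ ⟨M, hM, rfl⟩
  | @insert x Y hxY ih =>
    intro M hM hdisj hdeg
    rw [Finset.coe_insert, Set.disjoint_insert_left] at hdisj
    rw [Finset.card_insert_of_notMem hxY] at hdeg
    have hforbidden : (M.verts ∪ Y).ncard < (G.neighborSet x).ncard := by
      have := Set.ncard_union_le M.verts (Y : Set V)
      have := hdeg x (Finset.mem_insert_self x Y)
      rw [Set.ncard_coe_finset] at *
      omega
    obtain ⟨w, hxw, hw⟩ := exists_adj_notMem_of_ncard_lt hforbidden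
    rw [Set.mem_union, not_or] at hw
    obtain ⟨M', hM', hcard⟩ := ih (M ⊔ G.subgraphOfAdj hxw)
      (hM.sup_subgraphOfAdj hxw hdisj.1 hw.1)
      (by
        rw [verts_sup, subgraphOfAdj_verts, Set.disjoint_union_right, Set.disjoint_insert_right,
          Set.disjoint_singleton_right]
        exact ⟨hdisj.2, hxY, hw.2⟩)
      (fun y hy ↦ by
        have := ncard_verts_sup_subgraphOfAdj_le (M := M) hxw
        have := hdeg y (Finset.mem_insert_of_mem hy)
        omega)
    refine ⟨M', hM', ?_⟩
    rw [hcard, ncard_edgeSet_sup_subgraphOfAdj hxw hdisj.1, Finset.card_insert_of_notMem hxY]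
    ring

end Subgraph

end SimpleGraph

open SimpleGraph in
/-- Let `G` be a simple graph with matching number at most `s`, and let `X` be a set of
exactly `s` vertices of `G` each of degree exceeding `2s`. Then the complement of `X` is an
independent set in `G`: no edge of `G` has both endpoints outside `X`. -/
theorem complement_of_high_degree_independent {V : Type*} [Fintype V] (G : SimpleGraph V)
    (s : ℕ) (hmatch : MatchingNumberLE G s) (X : Set V) (hX : X.ncard = s)
    (hdeg : ∀ v ∈ X, 2 * s < (G.neighborSet v).ncard) :
    ∀ u v : V, u ∉ X → v ∉ X → ¬ G.Adj u v := by
  intro u v hu hv huv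
  set Y := (Set.toFinite X).toFinset
  have hY : Y.card = s := by rw [← Set.ncard_eq_toFinset_card X, hX]
  have hdisj : Disjoint (Y : Set V) (G.subgraphOfAdj huv).verts := by
    rw [Set.Finite.coe_toFinset, subgraphOfAdj_verts, Set.disjoint_insert_right,
      Set.disjoint_singleton_right]
    exact ⟨hu, hv⟩
  obtain ⟨M, hM, hcard⟩ := (Subgraph.IsMatching.subgraphOfAdj huv).exists_ncard_edgeSet_eq_add Y
    _ hdisj (fun y hy ↦ by
      rw [subgraphOfAdj_verts, Set.ncard_pair huv.ne, hY]
      have := hdeg y ((Set.Finite.mem_toFinset _).mp hy)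
      omega)
  have := hmatch M hM
  rw [edgeSet_subgraphOfAdj, Set.ncard_singleton, hY] at hcard
  omega
end

section
/- Let G be a simple graph containing no clique on k+1 vertices, and let u and v be distinct non-adjacent vertices of G. Let G' be the graph obtained from G by replacing the neighborhood of u by that of v, i.e. G' has the same edges as G among vertices other than u, and u is adjacent in G' exactly to the neighbors of v in G. Then G' contains no clique on k+1 vertices. -/
/-!
Sending `u` to `v` and fixing every other vertex is a graph homomorphism `G' →g G`. A
homomorphism is injective on a clique, since adjacent vertices have adjacent, hence distinct,
images; so a `(k+1)`-clique of `G'` would yield one of `G`.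
-/

namespace SimpleGraph

variable {V W : Type*} {G : SimpleGraph V} {n : ℕ}

theorem CliqueFree.of_hom {H : SimpleGraph W} (f : H →g G) (h : G.CliqueFree n) :
    H.CliqueFree n := by
  contrapose h
  rw [not_cliqueFree_iff_top_isContained] at h ⊢
  obtain ⟨c⟩ := h
  exact ⟨⟨f.comp c.toHom, Hom.injective_of_top_hom _⟩⟩

def replaceNeighborhoodHom [DecidableEq V] {G' : SimpleGraph V} {u v : V}
    (hsame : ∀ x y : V, x ≠ u → y ≠ u → (G'.Adj x y ↔ G.Adj x y))
    (hrepl : ∀ y : V, G'.Adj u y ↔ G.Adj v y) : G' →g G where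
  toFun := Function.update id u v
  map_rel' {x y} hxy := by
    by_cases hx : x = u <;> by_cases hy : y = u
    · subst hx hy
      exact absurd hxy (G'.loopless.irrefl _)
    · subst hx
      simpa [hy] using (hrepl y).mp hxy
    · subst hy
      simpa [hx] using ((hrepl x).mp hxy.symm).symm
    · simpa [hx, hy] using (hsame x y hx hy).mp hxy

end SimpleGraph

theorem zykov_symmetrization_cliqueFree_general {V : Type*} (G G' : SimpleGraph V) (k : ℕ)
    (hG : G.CliqueFree (k + 1)) (u v : V)
    (hsame : ∀ x y : V, x ≠ u → y ≠ u → (G'.Adj x y ↔ G.Adj x y))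
    (hrepl : ∀ y : V, G'.Adj u y ↔ G.Adj v y) :
    G'.CliqueFree (k + 1) := by
  classical
  exact hG.of_hom (SimpleGraph.replaceNeighborhoodHom hsame hrepl)

/-- Let `G` be a simple graph containing no clique on `k+1` vertices, and let `u` and `v` be
distinct non-adjacent vertices of `G`. Let `G'` be the graph obtained from `G` by replacing
the neighborhood of `u` by that of `v`: `G'` has the same edges as `G` among vertices other
than `u`, and `u` is adjacent in `G'` exactly to the neighbors of `v` in `G`. Then `G'`
contains no clique on `k+1` vertices. -/
theorem zykov_symmetrization_cliqueFree {V : Type*} (G G' : SimpleGraph V) (k : ℕ)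
    (hG : G.CliqueFree (k + 1)) (u v : V) (huv : u ≠ v) (hnadj : ¬ G.Adj u v)
    (hsame : ∀ x y : V, x ≠ u → y ≠ u → (G'.Adj x y ↔ G.Adj x y))
    (hrepl : ∀ y : V, G'.Adj u y ↔ G.Adj v y) :
    G'.CliqueFree (k + 1) :=
  zykov_symmetrization_cliqueFree_general G G' k hG u v hsame hrepl
end

section
/- Let n ≥ 2s+1 and k ≥ 2, and let G be a simple graph on n vertices with clique number at most k and matching number at most s having the maximum possible number of edges among all such graphs. Let B be a set of vertices of G such that every connected component of G−B has an odd number of vertices and |B| + Σ_i (|A_i|−1)/2 = s, where A_1,…,A_m are the components of G−B. Then the induced subgraph of G on B is a complete multipartite graph with at most k vertex classes. -/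
open Finset

namespace SimpleGraph

section ReplaceVertex

variable {V : Type*} [DecidableEq V] {G : SimpleGraph V} {s t u : V}

def ReplaceVertexInvariant (B : Set V) (p : SimpleGraph V → Prop) : Prop :=
  ∀ ⦃H : SimpleGraph V⦄ (s : V) ⦃t : V⦄, t ∈ B → p H → p (H.replaceVertex s t)

lemma induce_replaceVertex_of_notMem {A : Set V} (s : V) (ht : t ∉ A) :
    (G.replaceVertex s t).induce A = G.induce A := by
  ext ⟨a, ha⟩ ⟨b, hb⟩
  exact G.adj_replaceVertex_iff_of_ne s (ne_of_mem_of_not_mem ha ht) (ne_of_mem_of_not_mem hb ht)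

variable [Fintype V] [DecidableRel G.Adj]

lemma degree_replaceVertex_of_not_adj (hst : ¬G.Adj s t) :
    (G.replaceVertex s t).degree s = G.degree s := by
  unfold degree; congr 1; ext v
  simp only [mem_neighborFinset]
  by_cases hv : v = t
  · simp only [hv, not_adj_replaceVertex_same, hst]
  · exact G.adj_replaceVertex_iff_of_ne_left s hv

lemma degree_replaceVertex_of_adj_of_not_adj (hut : G.Adj u t) (hus : ¬G.Adj u s) :
    (G.replaceVertex s t).degree u = G.degree u - 1 := by
  rw [degree, degree, ← card_singleton t, ← card_sdiff_of_subset (by simpa using hut)]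
  congr 1; ext v
  simp_rw [mem_neighborFinset, mem_sdiff, mem_singleton, replaceVertex]
  split_ifs <;> simp_all [adj_comm]

namespace IsExtremal

variable {B : Set V} {p : SimpleGraph V → Prop}

lemma degree_le_of_not_adj (hG : G.IsExtremal p) (hp : ReplaceVertexInvariant B p)
    (ht : t ∈ B) (hst : ¬G.Adj s t) : G.degree s ≤ G.degree t := by
  have := hG.2 (hp s ht hG.1)
  rw [G.card_edgeFinset_replaceVertex_of_not_adj hst] at this
  omega

lemma degree_eq_of_not_adj (hG : G.IsExtremal p) (hp : ReplaceVertexInvariant B p)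
    (hs : s ∈ B) (ht : t ∈ B) (hst : ¬G.Adj s t) : G.degree s = G.degree t :=
  (hG.degree_le_of_not_adj hp ht hst).antisymm
    (hG.degree_le_of_not_adj hp hs fun h ↦ hst h.symm)

lemma not_adj_trans (hG : G.IsExtremal p) (hp : ReplaceVertexInvariant B p)
    (ht : t ∈ B) (hs : s ∈ B) (hu : u ∈ B) (hts : ¬G.Adj t s) (hsu : ¬G.Adj s u) :
    ¬G.Adj t u := by
  intro htu
  have hst : ¬G.Adj s t := fun h ↦ hts h.symm
  have dst := hG.degree_eq_of_not_adj hp hs ht hst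
  have dsu := hG.degree_eq_of_not_adj hp hs hu hsu
  have hus : ¬(G.replaceVertex s t).Adj s u :=
    (G.adj_replaceVertex_iff_of_ne s (by rintro rfl; exact hsu htu) htu.ne').not.mpr hsu
  -- Making both `t` and `u` copies of `s` loses `deg t + deg u - 1` edges and gains `2 deg s`.
  have hmore := hG.2 (hp s hu (hp s ht hG.1))
  rw [card_edgeFinset_replaceVertex_of_not_adj _ hus,
    card_edgeFinset_replaceVertex_of_not_adj _ hst, degree_replaceVertex_of_not_adj hst,
    degree_replaceVertex_of_adj_of_not_adj htu.symm fun h ↦ hsu h.symm] at hmore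
  have hu_pos : 0 < G.degree u := G.degree_pos_iff_exists_adj u |>.mpr ⟨t, htu.symm⟩
  omega

theorem isCompleteMultipartite_induce (hG : G.IsExtremal p) (hp : ReplaceVertexInvariant B p) :
    (G.induce B).IsCompleteMultipartite :=
  ⟨fun t s u ↦ hG.not_adj_trans hp t.2 s.2 u.2⟩

end IsExtremal

end ReplaceVertex

variable {V : Type*} {G : SimpleGraph V}

lemma IsCompleteMultipartite.exists_adj_iff_ne {k : ℕ} (h : G.IsCompleteMultipartite)
    (hc : G.Colorable k) : ∃ f : V → Fin k, ∀ x y, G.Adj x y ↔ f x ≠ f y := by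
  obtain ⟨C⟩ := hc
  let cls : V → Quotient h.setoid := Quotient.mk h.setoid
  refine ⟨fun x ↦ C (cls x).out, fun x y ↦ ?_⟩
  have hcls : cls x = cls y ↔ ¬G.Adj x y := Quotient.eq
  rw [← not_iff_not, not_not, ← hcls]
  refine ⟨fun hxy ↦ congrArg (fun q ↦ C q.out) hxy, fun hC ↦ ?_⟩
  rw [← Quotient.out_eq (cls x), ← Quotient.out_eq (cls y)]
  exact Quotient.sound fun hadj ↦ C.valid hadj hC

lemma Adj.mk_mem_sym2_image_supp {B : Set V} {a b : V} (hab : G.Adj a b) (ha : a ∉ B)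
    (hb : b ∉ B) :
    s(a, b) ∈ (Subtype.val '' ((G.induce Bᶜ).connectedComponentMk ⟨a, ha⟩).supp).sym2 := by
  have hab' : (G.induce Bᶜ).Adj ⟨a, ha⟩ ⟨b, hb⟩ := hab
  exact ⟨⟨⟨a, ha⟩, rfl, rfl⟩, ⟨⟨b, hb⟩, (ConnectedComponent.sound hab'.reachable).symm, rfl⟩⟩

lemma ncard_edgeSet_eq_card_edgeFinset [Fintype V] (G : SimpleGraph V) [DecidableRel G.Adj] :
    G.edgeSet.ncard = #G.edgeFinset := by
  rw [← coe_edgeFinset, Set.ncard_coe_finset]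

end SimpleGraph

namespace SimpleGraph.Subgraph.IsMatching

variable {V : Type*} {G : SimpleGraph V} {M : G.Subgraph}

lemma eq_of_mem_edgeSet_of_mem_s14 (hM : M.IsMatching) {e f : Sym2 V} (he : e ∈ M.edgeSet)
    (hf : f ∈ M.edgeSet) {v : V} (hve : v ∈ e) (hvf : v ∈ f) : e = f := by
  rw [← Sym2.other_spec hve] at he ⊢
  rw [← Sym2.other_spec hvf] at hf ⊢
  exact congrArg _ (hM.eq_of_adj_left he hf)

lemma pairwiseDisjoint_edgeSet (hM : M.IsMatching) :
    M.edgeSet.PairwiseDisjoint ((↑) : Sym2 V → Set V) :=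
  fun _ he _ hf hne ↦ Set.disjoint_left.mpr fun _ hve hvf ↦
    hne (hM.eq_of_mem_edgeSet_of_mem_s14 he hf hve hvf)

lemma ncard_coe_of_mem_edgeSet {e : Sym2 V} (he : e ∈ M.edgeSet) : (e : Set V).ncard = 2 := by
  induction e using Sym2.ind with
  | _ a b => rw [Sym2.coe_mk, Set.ncard_pair (M.adj_sub he).ne]

variable [Finite V] {E : Set (Sym2 V)} {S : Set V}

lemma ncard_biUnion_eq_two_mul (hM : M.IsMatching) (hE : E ⊆ M.edgeSet) :
    (⋃ e ∈ E, (e : Set V)).ncard = 2 * E.ncard := by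
  rw [(Set.toFinite E).ncard_biUnion (fun _ _ ↦ Set.toFinite _)
    (hM.pairwiseDisjoint_edgeSet.subset hE), ← finsum_one, mul_finsum_mem]
  exact finsum_mem_congr rfl fun e he ↦ ncard_coe_of_mem_edgeSet (hE he)

lemma two_mul_ncard_le (hM : M.IsMatching) (hE : E ⊆ M.edgeSet) (hES : E ⊆ S.sym2) :
    2 * E.ncard ≤ S.ncard := by
  rw [← hM.ncard_biUnion_eq_two_mul hE]
  exact Set.ncard_le_ncard (Set.iUnion₂_subset fun e he ↦ Set.mem_sym2_iff_subset.mp (hES he))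

lemma ncard_le_of_forall_exists_mem (hM : M.IsMatching) (hE : E ⊆ M.edgeSet)
    (hES : ∀ e ∈ E, ∃ v ∈ e, v ∈ S) : E.ncard ≤ S.ncard := by
  choose f hfe hfS using hES
  rw [← Nat.card_coe_set_eq, ← Nat.card_coe_set_eq]
  refine Nat.card_le_card_of_injective (fun e ↦ ⟨f e e.2, hfS e e.2⟩) fun e e' h ↦ ?_
  exact Subtype.ext <| hM.eq_of_mem_edgeSet_of_mem_s14 (hE e.2) (hE e'.2) (hfe e e.2)
    ((Subtype.mk.inj h).symm ▸ hfe e' e'.2)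

theorem ncard_edgeSet_le (hM : M.IsMatching) (B : Set V) :
    M.edgeSet.ncard ≤ B.ncard + ∑ᶠ c : (G.induce Bᶜ).ConnectedComponent, c.supp.ncard / 2 := by
  set EB := {e ∈ M.edgeSet | ∃ v ∈ e, v ∈ B}
  set EC := fun c : (G.induce Bᶜ).ConnectedComponent ↦ M.edgeSet ∩ (Subtype.val '' c.supp).sym2
  have hcover : M.edgeSet ⊆ EB ∪ ⋃ c, EC c := by
    intro e he
    induction e using Sym2.ind with
    | _ a b =>
      by_cases hB : ∃ v ∈ s(a, b), v ∈ B
      · exact Or.inl ⟨he, hB⟩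
      push Not at hB
      exact Or.inr <| Set.mem_iUnion.mpr ⟨_, he, (M.adj_sub he).mk_mem_sym2_image_supp
        (hB a (Sym2.mem_mk_left a b)) (hB b (Sym2.mem_mk_right a b))⟩
  have hEC : ∀ c, (EC c).ncard ≤ c.supp.ncard / 2 := fun c ↦ by
    have := hM.two_mul_ncard_le (E := EC c) Set.inter_subset_left Set.inter_subset_right
    rw [Set.ncard_image_of_injective _ Subtype.val_injective] at this
    omega
  calc M.edgeSet.ncard ≤ (EB ∪ ⋃ c, EC c).ncard := Set.ncard_le_ncard hcover
    _ ≤ EB.ncard + (⋃ c, EC c).ncard := Set.ncard_union_le _ _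
    _ ≤ EB.ncard + ∑ᶠ c, (EC c).ncard := Nat.add_le_add_left (Set.ncard_iUnion_le_of_finite _) _
    _ ≤ B.ncard + ∑ᶠ c : (G.induce Bᶜ).ConnectedComponent, c.supp.ncard / 2 :=
      Nat.add_le_add (hM.ncard_le_of_forall_exists_mem (Set.sep_subset _ _) fun _ he ↦ he.2)
        (finsum_le_finsum' (Set.toFinite _) (Set.toFinite _) hEC)

end SimpleGraph.Subgraph.IsMatching

lemma matchingNumberLE_of_odd_components {V : Type*} [Finite V] {H : SimpleGraph V} {B : Set V}
    {s : ℕ} (hodd : ∀ c : (H.induce Bᶜ).ConnectedComponent, Odd c.supp.ncard)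
    (hsum : B.ncard + ∑ᶠ c : (H.induce Bᶜ).ConnectedComponent, (c.supp.ncard - 1) / 2 = s) :
    MatchingNumberLE H s := fun M hM ↦ by
  refine (hM.ncard_edgeSet_le B).trans_eq ?_
  rw [← hsum]
  congr 2 with c
  obtain ⟨m, hm⟩ := hodd c
  omega

theorem induced_on_B_complete_multipartite_general (n s k : ℕ)
    (G : SimpleGraph (Fin n)) (hclique : G.CliqueFree (k + 1))
    (hmax : ∀ G' : SimpleGraph (Fin n), G'.CliqueFree (k + 1) → MatchingNumberLE G' s →
      G'.edgeSet.ncard ≤ G.edgeSet.ncard)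
    (B : Set (Fin n))
    (hodd : ∀ c : (G.induce Bᶜ).ConnectedComponent, Odd c.supp.ncard)
    (hsum : B.ncard + ∑ᶠ c : (G.induce Bᶜ).ConnectedComponent, (c.supp.ncard - 1) / 2 = s) :
    ∃ f : B → Fin k, ∀ x y : B, G.Adj x y ↔ f x ≠ f y := by
  classical
  let admissible (H : SimpleGraph (Fin n)) : Prop :=
    H.CliqueFree (k + 1) ∧ H.induce Bᶜ = G.induce Bᶜ
  have hext : G.IsExtremal admissible := by
    refine ⟨⟨hclique, rfl⟩, fun H _ ⟨hH, hHB⟩ ↦ ?_⟩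
    have := hmax H hH (matchingNumberLE_of_odd_components (hHB ▸ hodd) (hHB ▸ hsum))
    rwa [G.ncard_edgeSet_eq_card_edgeFinset, H.ncard_edgeSet_eq_card_edgeFinset] at this
  have hinv : SimpleGraph.ReplaceVertexInvariant B admissible := fun H s t ht hH ↦
    ⟨hH.1.replaceVertex s t,
      (SimpleGraph.induce_replaceVertex_of_notMem s (Set.notMem_compl_iff.mpr ht)).trans hH.2⟩
  have hmult : (G.induce B).IsCompleteMultipartite := hext.isCompleteMultipartite_induce hinv
  have hcol : (G.induce B).Colorable k := by
    simpa using hmult.colorable_of_cliqueFree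
      (hclique.comap (SimpleGraph.Embedding.induce B).isContained)
  exact hmult.exists_adj_iff_ne hcol

/-- Let `n ≥ 2s+1`, `k ≥ 2`, and let `G` be a simple graph on `n` vertices with clique number
at most `k` and matching number at most `s` having the maximum possible number of edges among
all such graphs. Let `B` be a set of vertices such that every connected component of `G - B`
has an odd number of vertices and `|B| + Σᵢ (|Aᵢ| - 1)/2 = s`, the sum ranging over the
connected components of `G - B`. Then the induced subgraph of `G` on `B` is a complete
multipartite graph with at most `k` vertex classes: there is a map `f : B → Fin k` such that
two vertices of `B` are adjacent in `G` if and only if their values under `f` differ. -/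
theorem induced_on_B_complete_multipartite (n s k : ℕ) (hn : 2 * s + 1 ≤ n) (hk : 2 ≤ k)
    (G : SimpleGraph (Fin n)) (hclique : G.CliqueFree (k + 1)) (hmatch : MatchingNumberLE G s)
    (hmax : ∀ G' : SimpleGraph (Fin n), G'.CliqueFree (k + 1) → MatchingNumberLE G' s →
      G'.edgeSet.ncard ≤ G.edgeSet.ncard)
    (B : Set (Fin n))
    (hodd : ∀ c : (G.induce Bᶜ).ConnectedComponent, Odd c.supp.ncard)
    (hsum : B.ncard + ∑ᶠ c : (G.induce Bᶜ).ConnectedComponent, (c.supp.ncard - 1) / 2 = s) :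
    ∃ f : B → Fin k, ∀ x y : B, G.Adj x y ↔ f x ≠ f y :=
  induced_on_B_complete_multipartite_general n s k G hclique hmax B hodd hsum
end

section
/- Let n ≥ 2s+1, k ≥ 2, and 0 ≤ b ≤ s. Let G be a simple graph on n vertices with clique number at most k, and suppose there is a set B of b vertices such that G−B has one connected component A_1 of size 2s−2b+1 and all other components of G−B are single vertices. Then the number of edges of G is at most f(b) = t(2s−b+1, k) + b·(n−2s+b−1). -/
open SimpleGraph Finset

namespace SimpleGraph

variable {V : Type*} {G : SimpleGraph V}

lemma mem_of_adj_of_ncard_supp_eq_one {B : Set V} {u v : V} (hu : u ∉ B)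
    (h : ((G.induce Bᶜ).connectedComponentMk ⟨u, hu⟩).supp.ncard = 1) (huv : G.Adj u v) :
    v ∈ B := by
  by_contra hv
  have hreach : (G.induce Bᶜ).Reachable ⟨v, hv⟩ ⟨u, hu⟩ := Adj.reachable huv.symm
  have hfin : ((G.induce Bᶜ).connectedComponentMk ⟨u, hu⟩).supp.Finite :=
    Set.finite_of_ncard_pos (h ▸ one_pos)
  have hsame := (Set.ncard_le_one hfin).1 h.le _ rfl _ (ConnectedComponent.sound hreach)
  exact huv.ne (congrArg Subtype.val hsame)

variable [Fintype V] [DecidableRel G.Adj]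

lemma card_edgeFinset_le_turanNum {k : ℕ} (h : G.CliqueFree (k + 1)) :
    #G.edgeFinset ≤ turanNum (Fintype.card V) k := by
  rw [turanNum, ← coe_edgeFinset, Set.ncard_coe_finset, card_edgeFinset_turanGraph]
  exact h.card_edgeFinset_le

lemma card_edgeFinset_le_induce_add_mul [DecidableEq V] (A B : Finset V)
    (hout : ∀ u v, G.Adj u v → u ∉ A → v ∈ B) :
    #G.edgeFinset ≤ #(G.induce A).edgeFinset + #B * #Aᶜ := by
  have hleaving :
      {e ∈ G.edgeFinset | ¬ e.toFinset ⊆ A} ⊆ Aᶜ.biUnion fun u => G.incidenceFinset u := by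
    intro e he
    simp only [mem_filter, not_subset, Sym2.mem_toFinset] at he
    obtain ⟨he, u, hue, huA⟩ := he
    exact mem_biUnion.2
      ⟨u, mem_compl.2 huA, (G.mem_incidenceFinset u e).2 ⟨mem_edgeFinset.1 he, hue⟩⟩
  have hdeg : ∀ u ∈ Aᶜ, #(G.incidenceFinset u) ≤ #B := fun u hu => by
    rw [card_incidenceFinset_eq_degree, ← card_neighborFinset_eq_degree]
    exact card_le_card fun v hv => hout u v ((G.mem_neighborFinset u v).1 hv) (mem_compl.1 hu)
  calc #G.edgeFinset
      = #{e ∈ G.edgeFinset | e.toFinset ⊆ A} + #{e ∈ G.edgeFinset | ¬ e.toFinset ⊆ A} :=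
        (card_filter_add_card_filter_not _).symm
    _ ≤ #(G.induce A).edgeFinset + #Aᶜ * #B := by
        rw [card_filter_edgeFinset_toFinset_subset]
        gcongr
        exact (card_le_card hleaving).trans (card_biUnion_le_card_mul _ _ _ hdeg)
    _ = _ := by rw [mul_comm]

end SimpleGraph

theorem edge_bound_given_structure_general (n s k b : ℕ)
    (hb : b ≤ s) (G : SimpleGraph (Fin n)) (hclique : G.CliqueFree (k + 1))
    (B : Set (Fin n)) (hB : B.ncard = b)
    (hstruct : ∃ c₀ : (G.induce Bᶜ).ConnectedComponent,
      c₀.supp.ncard = 2 * s - 2 * b + 1 ∧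
      ∀ c : (G.induce Bᶜ).ConnectedComponent, c ≠ c₀ → c.supp.ncard = 1) :
    G.edgeSet.ncard ≤ turanNum (2 * s - b + 1) k + b * (n - 2 * s + b - 1) := by
  classical
  obtain ⟨c₀, hc₀, hother⟩ := hstruct
  set A : Finset (Fin n) := (B ∪ Subtype.val '' c₀.supp).toFinset
  have hA : #A = 2 * s - b + 1 := by
    rw [← Set.ncard_eq_toFinset_card', Set.ncard_union_eq, hB,
      Set.ncard_image_of_injective _ Subtype.val_injective, hc₀]
    · omega
    · exact Set.disjoint_right.2 fun _ ⟨x, _, hx⟩ => hx ▸ x.2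
  have hout : ∀ u v, G.Adj u v → u ∉ A → v ∈ B.toFinset := by
    intro u v huv huA
    simp only [A, Set.mem_toFinset, Set.mem_union, not_or] at huA
    refine Set.mem_toFinset.2 (mem_of_adj_of_ncard_supp_eq_one huA.1 (hother _ ?_) huv)
    exact fun hc => huA.2 ⟨_, hc, rfl⟩
  have hturan := card_edgeFinset_le_turanNum (G := G.induce (A : Set (Fin n)))
    (hclique.comap ⟨(Embedding.induce _).toCopy⟩)
  rw [show Fintype.card (A : Set (Fin n)) = 2 * s - b + 1 by simp [hA]] at hturan
  rw [← coe_edgeFinset, Set.ncard_coe_finset]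
  calc #G.edgeFinset ≤ #(G.induce A).edgeFinset + #B.toFinset * #Aᶜ :=
        card_edgeFinset_le_induce_add_mul A _ hout
    _ ≤ _ := by
        rw [← Set.ncard_eq_toFinset_card', hB, card_compl, Fintype.card_fin, hA]
        exact add_le_add hturan (Nat.mul_le_mul_left _ (by omega))

/-- Let `n ≥ 2s+1`, `k ≥ 2`, and `0 ≤ b ≤ s`. Let `G` be a simple graph on `n` vertices with
clique number at most `k`, and suppose there is a set `B` of `b` vertices such that `G - B`
has one connected component of size `2s - 2b + 1` and all other components of `G - B` are
single vertices. Then the number of edges of `G` is at most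
`f(b) = t(2s-b+1, k) + b·(n-2s+b-1)`. -/
theorem edge_bound_given_structure (n s k b : ℕ) (hn : 2 * s + 1 ≤ n) (hk : 2 ≤ k)
    (hb : b ≤ s) (G : SimpleGraph (Fin n)) (hclique : G.CliqueFree (k + 1))
    (B : Set (Fin n)) (hB : B.ncard = b)
    (hstruct : ∃ c₀ : (G.induce Bᶜ).ConnectedComponent,
      c₀.supp.ncard = 2 * s - 2 * b + 1 ∧
      ∀ c : (G.induce Bᶜ).ConnectedComponent, c ≠ c₀ → c.supp.ncard = 1) :
    G.edgeSet.ncard ≤ turanNum (2 * s - b + 1) k + b * (n - 2 * s + b - 1) :=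
  edge_bound_given_structure_general n s k b hb G hclique B hB hstruct
end
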